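/- Let M be an invertible complex n×n matrix with positive definite imaginary part Im M = (M - M*)/(2i), let S : C^{n×n} → C^{n×n} be a linear map preserving positive semidefinite matrices, let A be an n×n matrix with negative semidefinite imaginary part, and let z ∈ ℂ with Im z > 0. If -M⁻¹ = z·I - A + S[M], then Im M ≥ (Im z)·‖M⁻¹‖⁻²·I, where ‖·‖ is the operator norm. In particular Im M is bounded below by a positive multiple of the identity. -/

import Mathlib

/-!
With `y = Mᴴ x`, the quadratic form of `-M⁻¹` at `y` is minus the conjugate of that of `M` at `x`,
so `Im ⟪x, M x⟫ = Im ⟪y, -M⁻¹ y⟫ = Im z ‖y‖² - Im ⟪y, A y⟫ + Im ⟪y, S[M] y⟫ ≥ Im z ‖y‖²`: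
`Im A ≤ 0`, and a positivity preserving map commutes with `ᴴ`, so `Im S[M] = S[Im M] ≥ 0`.
Finally `x = (M⁻¹)ᴴ y` gives `‖x‖ ≤ ‖M⁻¹‖ ‖y‖`.
-/

open Matrix
open scoped ComplexOrder

/-- The imaginary part `(M - M*)/(2i)` of a complex square matrix. -/
noncomputable def imPart {n : ℕ} (M : Matrix (Fin n) (Fin n) ℂ) : Matrix (Fin n) (Fin n) ℂ :=
  (2 * Complex.I)⁻¹ • (M - Mᴴ)

/-- The operator norm of a matrix, induced by the Euclidean norm on `ℂⁿ`. -/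
noncomputable def opNorm {n : ℕ} (M : Matrix (Fin n) (Fin n) ℂ) : ℝ :=
  ‖Matrix.toEuclideanCLM (𝕜 := ℂ) M‖

section

variable {ι : Type*} [Fintype ι]

open scoped MatrixOrder in
theorem LinearMap.map_conjTranspose_of_posSemidef [DecidableEq ι]
    (S : Matrix ι ι ℂ →ₗ[ℂ] Matrix ι ι ℂ) (hS : ∀ R, R.PosSemidef → (S R).PosSemidef)
    (C : Matrix ι ι ℂ) : S Cᴴ = (S C)ᴴ :=
  map_star (PositiveLinearMap.mk₀ S fun R hR => (hS R (nonneg_iff_posSemidef.1 hR)).nonneg) C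

theorem star_dotProduct_conjTranspose_mulVec (C : Matrix ι ι ℂ) (x : ι → ℂ) :
    star x ⬝ᵥ Cᴴ *ᵥ x = star (star x ⬝ᵥ C *ᵥ x) := by
  rw [mulVec_conjTranspose, star_dotProduct_star, dotProduct_mulVec]

theorem star_dotProduct_self_eq_norm_sq (x : ι → ℂ) :
    star x ⬝ᵥ x = ((‖WithLp.toLp 2 x‖ ^ 2 : ℝ) : ℂ) := by
  rw [dotProduct_comm, ← EuclideanSpace.inner_toLp_toLp, inner_self_eq_norm_sq_to_K]
  push_cast; rfl

theorem star_conjTranspose_mulVec_dotProduct_mulVec (M B : Matrix ι ι ℂ) (x : ι → ℂ) :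
    star (Mᴴ *ᵥ x) ⬝ᵥ B *ᵥ (Mᴴ *ᵥ x) = star x ⬝ᵥ (M * B * Mᴴ) *ᵥ x := by
  rw [star_mulVec, conjTranspose_conjTranspose, ← dotProduct_mulVec, mulVec_mulVec,
    mulVec_mulVec, Matrix.mul_assoc]

theorem posSemidef_sub_smul_one_of_le [DecidableEq ι] {H : Matrix ι ι ℂ} (hH : H.IsHermitian)
    {c : ℝ} (h : ∀ x, ((c * ‖WithLp.toLp 2 x‖ ^ 2 : ℝ) : ℂ) ≤ star x ⬝ᵥ H *ᵥ x) :
    (H - (c : ℂ) • (1 : Matrix ι ι ℂ)).PosSemidef := by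
  rw [posSemidef_iff_dotProduct_mulVec]
  refine ⟨hH.sub (isHermitian_one.smul (Complex.conj_ofReal c)), fun x => ?_⟩
  rw [sub_mulVec, dotProduct_sub, smul_mulVec, one_mulVec, dotProduct_smul, smul_eq_mul,
    star_dotProduct_self_eq_norm_sq, sub_nonneg]
  exact_mod_cast h x

end

section

variable {n : ℕ}

theorem star_dotProduct_imPart_mulVec (C : Matrix (Fin n) (Fin n) ℂ) (x : Fin n → ℂ) :
    star x ⬝ᵥ imPart C *ᵥ x = ((star x ⬝ᵥ C *ᵥ x).im : ℂ) := by
  rw [imPart, smul_mulVec, dotProduct_smul, sub_mulVec, dotProduct_sub,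
    star_dotProduct_conjTranspose_mulVec, smul_eq_mul, Complex.star_def, Complex.sub_conj]
  field_simp
  push_cast
  ring

theorem imPart_isHermitian (C : Matrix (Fin n) (Fin n) ℂ) : (imPart C).IsHermitian := by
  rw [IsHermitian, imPart, conjTranspose_smul, conjTranspose_sub, conjTranspose_conjTranspose,
    ← neg_sub, smul_neg, ← neg_smul]
  congr 1
  simp

theorem imPart_neg (C : Matrix (Fin n) (Fin n) ℂ) : imPart (-C) = -imPart C := by
  rw [imPart, imPart, conjTranspose_neg, ← smul_neg]
  congr 1; abel

theorem imPart_map_of_posSemidef (S : Matrix (Fin n) (Fin n) ℂ →ₗ[ℂ] Matrix (Fin n) (Fin n) ℂ)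
    (hS : ∀ R, R.PosSemidef → (S R).PosSemidef) (C : Matrix (Fin n) (Fin n) ℂ) :
    imPart (S C) = S (imPart C) := by
  rw [imPart, imPart, ← S.map_conjTranspose_of_posSemidef hS, map_smul, map_sub]

theorem im_star_dotProduct_mulVec_nonneg {C : Matrix (Fin n) (Fin n) ℂ}
    (hC : (imPart C).PosSemidef) (x : Fin n → ℂ) : 0 ≤ (star x ⬝ᵥ C *ᵥ x).im := by
  have := hC.dotProduct_mulVec_nonneg x
  rwa [star_dotProduct_imPart_mulVec, Complex.zero_le_real] at this

open scoped Matrix.Norms.L2Operator in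
theorem norm_toLp_le_opNorm_inv_mul {M : Matrix (Fin n) (Fin n) ℂ} (hM : IsUnit M)
    (x : Fin n → ℂ) : ‖WithLp.toLp 2 x‖ ≤ opNorm M⁻¹ * ‖WithLp.toLp 2 (Mᴴ *ᵥ x)‖ := by
  have hx : x = (M⁻¹)ᴴ *ᵥ (Mᴴ *ᵥ x) := by
    rw [mulVec_mulVec, ← conjTranspose_mul, mul_nonsing_inv M ((isUnit_iff_isUnit_det M).mp hM),
      conjTranspose_one, one_mulVec]
  conv_lhs => rw [hx]
  rw [opNorm, l2_opNorm_toEuclideanCLM, ← l2_opNorm_conjTranspose]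
  exact l2_opNorm_mulVec (M⁻¹)ᴴ (WithLp.toLp 2 (Mᴴ *ᵥ x))

theorem im_mul_norm_sq_le_im_star_dotProduct_mulVec {M A : Matrix (Fin n) (Fin n) ℂ}
    (hM : IsUnit M) (hIm : (imPart M).PosSemidef)
    {S : Matrix (Fin n) (Fin n) ℂ →ₗ[ℂ] Matrix (Fin n) (Fin n) ℂ}
    (hS : ∀ R, R.PosSemidef → (S R).PosSemidef) (hA : (-(imPart A)).PosSemidef) {z : ℂ}
    (heq : -M⁻¹ = z • (1 : Matrix (Fin n) (Fin n) ℂ) - A + S M) (x : Fin n → ℂ) :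
    z.im * ‖WithLp.toLp 2 (Mᴴ *ᵥ x)‖ ^ 2 ≤ (star x ⬝ᵥ M *ᵥ x).im := by
  set y := Mᴴ *ᵥ x
  have hconj : star y ⬝ᵥ -M⁻¹ *ᵥ y = -star (star x ⬝ᵥ M *ᵥ x) := by
    rw [star_conjTranspose_mulVec_dotProduct_mulVec, Matrix.mul_neg, Matrix.neg_mul,
      mul_nonsing_inv M ((isUnit_iff_isUnit_det M).mp hM), Matrix.one_mul, neg_mulVec,
      dotProduct_neg, star_dotProduct_conjTranspose_mulVec]
  have hsplit : star y ⬝ᵥ -M⁻¹ *ᵥ y =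
      z * ((‖WithLp.toLp 2 y‖ ^ 2 : ℝ) : ℂ) + star y ⬝ᵥ -A *ᵥ y + star y ⬝ᵥ S M *ᵥ y := by
    rw [heq, sub_eq_add_neg, add_mulVec, add_mulVec, smul_mulVec, one_mulVec, dotProduct_add,
      dotProduct_add, dotProduct_smul, star_dotProduct_self_eq_norm_sq, smul_eq_mul]
  have hAy : 0 ≤ (star y ⬝ᵥ -A *ᵥ y).im :=
    im_star_dotProduct_mulVec_nonneg (by rwa [imPart_neg]) y
  have hSMy : 0 ≤ (star y ⬝ᵥ S M *ᵥ y).im :=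
    im_star_dotProduct_mulVec_nonneg (by rw [imPart_map_of_posSemidef S hS]; exact hS _ hIm) y
  have := congrArg Complex.im (hconj.symm.trans hsplit)
  simp only [Complex.neg_im, Complex.star_def, Complex.conj_im, neg_neg, Complex.add_im,
    Complex.mul_im, Complex.ofReal_re, Complex.ofReal_im, mul_zero] at this
  linarith

end

theorem stmt_0 {n : ℕ} (M A : Matrix (Fin n) (Fin n) ℂ) (hM : IsUnit M)
    (hIm : (imPart M).PosDef)
    (S : Matrix (Fin n) (Fin n) ℂ →ₗ[ℂ] Matrix (Fin n) (Fin n) ℂ)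
    (hS : ∀ R : Matrix (Fin n) (Fin n) ℂ, R.PosSemidef → (S R).PosSemidef)
    (hA : (-(imPart A)).PosSemidef)
    (z : ℂ) (hz : 0 < z.im)
    (heq : -M⁻¹ = z • (1 : Matrix (Fin n) (Fin n) ℂ) - A + S M) :
    (imPart M - ((z.im / opNorm M⁻¹ ^ 2 : ℝ) : ℂ) • (1 : Matrix (Fin n) (Fin n) ℂ)).PosSemidef := by
  set k := opNorm M⁻¹
  have hc : z.im / k ^ 2 * k ^ 2 ≤ z.im := by
    rcases eq_or_ne k 0 with hk | hk
    · simp [hk, hz.le]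
    · rw [div_mul_cancel₀ _ (pow_ne_zero 2 hk)]
  refine posSemidef_sub_smul_one_of_le (imPart_isHermitian M) fun x => ?_
  rw [star_dotProduct_imPart_mulVec, Complex.real_le_real]
  have hx := norm_toLp_le_opNorm_inv_mul hM x
  have hy := im_mul_norm_sq_le_im_star_dotProduct_mulVec hM hIm.posSemidef hS hA heq x
  calc z.im / k ^ 2 * ‖WithLp.toLp 2 x‖ ^ 2
      ≤ z.im / k ^ 2 * (k * ‖WithLp.toLp 2 (Mᴴ *ᵥ x)‖) ^ 2 := by gcongr
    _ = z.im / k ^ 2 * k ^ 2 * ‖WithLp.toLp 2 (Mᴴ *ᵥ x)‖ ^ 2 := by ring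
    _ ≤ z.im * ‖WithLp.toLp 2 (Mᴴ *ᵥ x)‖ ^ 2 := by gcongr
    _ ≤ _ := hy
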